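/- arXiv:1201.4981 — 3 statements merged into one kernel-verified Lean document; each statement's English description precedes it below -/
import Mathlib

section
/- Let ⟨M, ⋆, R, γ, η, ε⟩ be a right-monoidal category, E = End(R), μ_M := (ε_R⋆M)∘γ_{R,R,M}, δ_M := γ_{M,R,R}∘(M⋆η_R). Then for all objects L, M, N of M and all r ∈ E: (1) ρ_i(r)∘γ_{L,M,N} = γ_{L,M,N}∘ρ_i(r) for i = 1, 2; (2) ρ_1(r)∘η_N = (r⋆N)∘η_N on R⋆N; (3) ε_L∘ρ_1(r) = ε_L∘(L⋆r) on L⋆R; (4) ρ_1(r)∘μ_N = μ_N∘ρ_2(r); (5) ρ_1(r)∘δ_L = δ_L∘ρ_1(r); (6) μ_N∘ρ_1(r) = μ_N∘(R⋆(r⋆N)); (7) ρ_2(r)∘δ_L = ((L⋆r)⋆R)∘δ_L. -/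
open CategoryTheory

universe v u

/-- A right-monoidal (skew-monoidal) category structure on a category `C`
with unit object `R`: a product `⋆`, a skew-associator `γ`, a unit `η` and
a counit `ε`, none of which is assumed invertible, subject to the pentagon
and the four (co)unit axioms. -/
structure RightMonoidalStruct (C : Type u) [Category.{v} C] (R : C) where
  smp : C → C → C
  smpHom : ∀ {X X' Y Y' : C}, (X ⟶ X') → (Y ⟶ Y') → (smp X Y ⟶ smp X' Y')
  smpHom_id : ∀ (X Y : C), smpHom (𝟙 X) (𝟙 Y) = 𝟙 (smp X Y)
  smpHom_comp : ∀ {X X' X'' Y Y' Y'' : C} (f : X ⟶ X') (f' : X' ⟶ X'')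
      (g : Y ⟶ Y') (g' : Y' ⟶ Y''),
      smpHom (f ≫ f') (g ≫ g') = smpHom f g ≫ smpHom f' g'
  γ : ∀ (L M N : C), smp L (smp M N) ⟶ smp (smp L M) N
  η : ∀ (M : C), M ⟶ smp R M
  ε : ∀ (M : C), smp M R ⟶ M
  γ_natural : ∀ {L L' M M' N N' : C} (f : L ⟶ L') (g : M ⟶ M') (h : N ⟶ N'),
      smpHom f (smpHom g h) ≫ γ L' M' N' = γ L M N ≫ smpHom (smpHom f g) h
  η_natural : ∀ {M M' : C} (f : M ⟶ M'), f ≫ η M' = η M ≫ smpHom (𝟙 R) f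
  ε_natural : ∀ {M M' : C} (f : M ⟶ M'), smpHom f (𝟙 R) ≫ ε M' = ε M ≫ f
  pentagon : ∀ (K L M N : C),
      smpHom (𝟙 K) (γ L M N) ≫ γ K (smp L M) N ≫ smpHom (γ K L M) (𝟙 N)
        = γ K L (smp M N) ≫ γ (smp K L) M N
  unit_triangle : ∀ (M N : C), η (smp M N) ≫ γ R M N = smpHom (η M) (𝟙 N)
  counit_triangle : ∀ (M N : C), γ M N R ≫ ε (smp M N) = smpHom (𝟙 M) (ε N)
  mixed_triangle : ∀ (M N : C),
      smpHom (𝟙 M) (η N) ≫ γ M R N ≫ smpHom (ε M) (𝟙 N) = 𝟙 (smp M N)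
  unit_counit : η R ≫ ε R = 𝟙 R


variable {C : Type u} [Category.{v} C] {R : C}

/-- The multiplication `μ_M := (ε_R ⋆ M) ∘ γ_{R,R,M}` of the canonical monad `T = R ⋆ -`. -/
def RightMonoidalStruct.μ (S : RightMonoidalStruct C R) (M : C) :
    S.smp R (S.smp R M) ⟶ S.smp R M :=
  S.γ R R M ≫ S.smpHom (S.ε R) (𝟙 M)

/-- The comultiplication `δ_M := γ_{M,R,R} ∘ (M ⋆ η_R)` of the canonical comonad `Q = - ⋆ R`. -/
def RightMonoidalStruct.δ (S : RightMonoidalStruct C R) (M : C) :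
    S.smp M R ⟶ S.smp (S.smp M R) R :=
  S.smpHom (𝟙 M) (S.η R) ≫ S.γ M R R


/-- The canonical right `E`-action (`E = End R`) on a right-monoidal product
`X ⋆ Y`:  `ρ(r) := (ε_X ⋆ Y) ∘ γ_{X,R,Y} ∘ (X ⋆ (r ⋆ Y)) ∘ (X ⋆ η_Y)`. -/
def rhoAct (S : RightMonoidalStruct C R) (X Y : C) (r : R ⟶ R) :
    S.smp X Y ⟶ S.smp X Y :=
  S.smpHom (𝟙 X) (S.η Y) ≫ S.smpHom (𝟙 X) (S.smpHom r (𝟙 Y)) ≫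
    S.γ X R Y ≫ S.smpHom (S.ε X) (𝟙 Y)


namespace RhoAux

variable (S : RightMonoidalStruct C R)

lemma hl {X Y Y' Y''} (g : Y ⟶ Y') (g' : Y' ⟶ Y'') :
    S.smpHom (𝟙 X) (g ≫ g') = S.smpHom (𝟙 X) g ≫ S.smpHom (𝟙 X) g' := by
  rw [← S.smpHom_comp]; simp

lemma hr {X X' X'' Y} (f : X ⟶ X') (f' : X' ⟶ X'') :
    S.smpHom (f ≫ f') (𝟙 Y) = S.smpHom f (𝟙 Y) ≫ S.smpHom f' (𝟙 Y) := by
  rw [← S.smpHom_comp]; simp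

lemma exch {X X' Y Y'} (f : X ⟶ X') (g : Y ⟶ Y') :
    S.smpHom f (𝟙 Y) ≫ S.smpHom (𝟙 X') g = S.smpHom (𝟙 X) g ≫ S.smpHom f (𝟙 Y') := by
  rw [← S.smpHom_comp, ← S.smpHom_comp]; simp

lemma gnat₁ {L L' : C} (M N : C) (f : L ⟶ L') :
    S.smpHom f (𝟙 (S.smp M N)) ≫ S.γ L' M N
      = S.γ L M N ≫ S.smpHom (S.smpHom f (𝟙 M)) (𝟙 N) := by
  have h := S.γ_natural f (𝟙 M) (𝟙 N); rwa [S.smpHom_id] at h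

lemma gnat₂ {M M' : C} (L N : C) (g : M ⟶ M') :
    S.smpHom (𝟙 L) (S.smpHom g (𝟙 N)) ≫ S.γ L M' N
      = S.γ L M N ≫ S.smpHom (S.smpHom (𝟙 L) g) (𝟙 N) := by
  exact S.γ_natural (𝟙 L) g (𝟙 N)

lemma gnat₃ {N N' : C} (L M : C) (h : N ⟶ N') :
    S.smpHom (𝟙 L) (S.smpHom (𝟙 M) h) ≫ S.γ L M N'
      = S.γ L M N ≫ S.smpHom (𝟙 (S.smp L M)) h := by
  have h' := S.γ_natural (𝟙 L) (𝟙 M) h; rwa [S.smpHom_id] at h'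

/-- `ρ` is natural in its first variable. -/
lemma rho_nat_left {X X' : C} (Y : C) (f : X ⟶ X') (r : R ⟶ R) :
    S.smpHom f (𝟙 Y) ≫ rhoAct S X' Y r = rhoAct S X Y r ≫ S.smpHom f (𝟙 Y) := by
  unfold rhoAct
  have e1 : S.smpHom f (𝟙 Y) ≫ S.smpHom (𝟙 X') (S.η Y)
      = S.smpHom (𝟙 X) (S.η Y) ≫ S.smpHom f (𝟙 (S.smp R Y)) := exch S f (S.η Y)
  have e2 : S.smpHom f (𝟙 (S.smp R Y)) ≫ S.smpHom (𝟙 X') (S.smpHom r (𝟙 Y))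
      = S.smpHom (𝟙 X) (S.smpHom r (𝟙 Y)) ≫ S.smpHom f (𝟙 (S.smp R Y)) :=
    exch S f (S.smpHom r (𝟙 Y))
  have e3 := gnat₁ S R Y f
  have e4 : S.smpHom (S.smpHom f (𝟙 R)) (𝟙 Y) ≫ S.smpHom (S.ε X') (𝟙 Y)
      = S.smpHom (S.ε X) (𝟙 Y) ≫ S.smpHom f (𝟙 Y) := by
    rw [← hr, ← hr, S.ε_natural]
  slice_lhs 1 2 => rw [e1]
  slice_lhs 2 3 => rw [e2]
  slice_lhs 3 4 => rw [e3]
  slice_lhs 4 5 => rw [e4]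
  simp only [Category.assoc]

/-- `ρ` is natural in its second variable. -/
lemma rho_nat_right {Y Y' : C} (X : C) (g : Y ⟶ Y') (r : R ⟶ R) :
    S.smpHom (𝟙 X) g ≫ rhoAct S X Y' r = rhoAct S X Y r ≫ S.smpHom (𝟙 X) g := by
  unfold rhoAct
  have e1 : S.smpHom (𝟙 X) g ≫ S.smpHom (𝟙 X) (S.η Y')
      = S.smpHom (𝟙 X) (S.η Y) ≫ S.smpHom (𝟙 X) (S.smpHom (𝟙 R) g) := by
    rw [← hl, ← hl, S.η_natural]
  have e2 : S.smpHom (𝟙 X) (S.smpHom (𝟙 R) g) ≫ S.smpHom (𝟙 X) (S.smpHom r (𝟙 Y'))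
      = S.smpHom (𝟙 X) (S.smpHom r (𝟙 Y)) ≫ S.smpHom (𝟙 X) (S.smpHom (𝟙 R) g) := by
    rw [← hl, ← hl, ← exch]
  have e3 := gnat₃ S X R g
  have e4 : S.smpHom (𝟙 (S.smp X R)) g ≫ S.smpHom (S.ε X) (𝟙 Y')
      = S.smpHom (S.ε X) (𝟙 Y) ≫ S.smpHom (𝟙 X) g := by
    rw [← exch]
  slice_lhs 1 2 => rw [e1]
  slice_lhs 2 3 => rw [e2]
  slice_lhs 3 4 => rw [e3]
  slice_lhs 4 5 => rw [e4]
  simp only [Category.assoc]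

/-- Statement (2). -/
lemma rho_eta (N : C) (r : R ⟶ R) :
    S.η N ≫ rhoAct S R N r = S.η N ≫ S.smpHom r (𝟙 N) := by
  unfold rhoAct
  have e1 : S.η N ≫ S.smpHom (𝟙 R) (S.η N) = S.η N ≫ S.η (S.smp R N) :=
    (S.η_natural (S.η N)).symm
  have e2 : S.η (S.smp R N) ≫ S.smpHom (𝟙 R) (S.smpHom r (𝟙 N))
      = S.smpHom r (𝟙 N) ≫ S.η (S.smp R N) := (S.η_natural (S.smpHom r (𝟙 N))).symm
  have e3 : S.η (S.smp R N) ≫ S.γ R R N = S.smpHom (S.η R) (𝟙 N) := S.unit_triangle R N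
  have e4 : S.smpHom (S.η R) (𝟙 N) ≫ S.smpHom (S.ε R) (𝟙 N) = 𝟙 (S.smp R N) := by
    rw [← hr, S.unit_counit, S.smpHom_id]
  slice_lhs 1 2 => rw [e1]
  slice_lhs 2 3 => rw [e2]
  slice_lhs 3 4 => rw [e3]
  slice_lhs 3 4 => rw [e4]
  simp

/-- Statement (3). -/
lemma rho_eps (L : C) (r : R ⟶ R) :
    rhoAct S L R r ≫ S.ε L = S.smpHom (𝟙 L) r ≫ S.ε L := by
  unfold rhoAct
  have e1 : S.smpHom (S.ε L) (𝟙 R) ≫ S.ε L = S.ε (S.smp L R) ≫ S.ε L :=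
    S.ε_natural (S.ε L)
  have e2 : S.γ L R R ≫ S.ε (S.smp L R) = S.smpHom (𝟙 L) (S.ε R) :=
    S.counit_triangle L R
  have e3 : S.smpHom (𝟙 L) (S.smpHom r (𝟙 R)) ≫ S.smpHom (𝟙 L) (S.ε R)
      = S.smpHom (𝟙 L) (S.ε R) ≫ S.smpHom (𝟙 L) r := by
    rw [← hl, ← hl, S.ε_natural]
  have e4 : S.smpHom (𝟙 L) (S.η R) ≫ S.smpHom (𝟙 L) (S.ε R) = 𝟙 (S.smp L R) := by
    rw [← hl, S.unit_counit, S.smpHom_id]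
  slice_lhs 4 5 => rw [e1]
  slice_lhs 3 4 => rw [e2]
  slice_lhs 2 3 => rw [e3]
  slice_lhs 1 2 => rw [e4]
  simp

/-- Statement (1), `i = 1`. -/
lemma rho_gamma₁ (L M N : C) (r : R ⟶ R) :
    S.γ L M N ≫ S.smpHom (rhoAct S L M r) (𝟙 N)
      = rhoAct S L (S.smp M N) r ≫ S.γ L M N := by
  unfold rhoAct
  -- work on the RHS
  have e1 := gnat₁ S M N (S.ε L)
  have e2 : S.γ L R (S.smp M N) ≫ S.γ (S.smp L R) M N
      = S.smpHom (𝟙 L) (S.γ R M N) ≫ S.γ L (S.smp R M) N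
          ≫ S.smpHom (S.γ L R M) (𝟙 N) := (S.pentagon L R M N).symm
  have e3 : S.smpHom (𝟙 L) (S.smpHom r (𝟙 (S.smp M N)))
        ≫ S.smpHom (𝟙 L) (S.γ R M N)
      = S.smpHom (𝟙 L) (S.γ R M N)
        ≫ S.smpHom (𝟙 L) (S.smpHom (S.smpHom r (𝟙 M)) (𝟙 N)) := by
    rw [← hl, ← hl, gnat₁]
  have e4 : S.smpHom (𝟙 L) (S.η (S.smp M N)) ≫ S.smpHom (𝟙 L) (S.γ R M N)
      = S.smpHom (𝟙 L) (S.smpHom (S.η M) (𝟙 N)) := by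
    rw [← hl, S.unit_triangle]
  have e5 : S.smpHom (𝟙 L) (S.smpHom (S.η M) (𝟙 N))
        ≫ S.smpHom (𝟙 L) (S.smpHom (S.smpHom r (𝟙 M)) (𝟙 N))
      = S.smpHom (𝟙 L) (S.smpHom (S.η M ≫ S.smpHom r (𝟙 M)) (𝟙 N)) := by
    rw [← hl, ← hr]
  have e6 : S.smpHom (𝟙 L) (S.smpHom (S.η M ≫ S.smpHom r (𝟙 M)) (𝟙 N))
        ≫ S.γ L (S.smp R M) N
      = S.γ L M N ≫ S.smpHom (S.smpHom (𝟙 L) (S.η M ≫ S.smpHom r (𝟙 M))) (𝟙 N) :=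
    gnat₂ S L N _
  slice_rhs 4 5 => rw [e1]
  slice_rhs 3 4 => rw [e2]
  slice_rhs 2 3 => rw [e3]
  slice_rhs 1 2 => rw [e4]
  slice_rhs 1 2 => rw [e5]
  slice_rhs 1 2 => rw [e6]
  slice_rhs 2 4 =>
    rw [← hr, ← hr, hl]
  simp only [Category.assoc]

/-- Statement (1), `i = 2`. -/
lemma rho_gamma₂ (L M N : C) (r : R ⟶ R) :
    S.γ L M N ≫ rhoAct S (S.smp L M) N r
      = S.smpHom (𝟙 L) (rhoAct S M N r) ≫ S.γ L M N := by
  unfold rhoAct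
  have e1 : S.γ L M N ≫ S.smpHom (𝟙 (S.smp L M)) (S.η N)
      = S.smpHom (𝟙 L) (S.smpHom (𝟙 M) (S.η N)) ≫ S.γ L M (S.smp R N) :=
    (gnat₃ S L M (S.η N)).symm
  have e2 : S.γ L M (S.smp R N) ≫ S.smpHom (𝟙 (S.smp L M)) (S.smpHom r (𝟙 N))
      = S.smpHom (𝟙 L) (S.smpHom (𝟙 M) (S.smpHom r (𝟙 N)))
          ≫ S.γ L M (S.smp R N) := by
    rw [gnat₃]
  have e3 : S.γ L M (S.smp R N) ≫ S.γ (S.smp L M) R N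
      = S.smpHom (𝟙 L) (S.γ M R N) ≫ S.γ L (S.smp M R) N
          ≫ S.smpHom (S.γ L M R) (𝟙 N) := (S.pentagon L M R N).symm
  have e4 : S.smpHom (S.γ L M R) (𝟙 N) ≫ S.smpHom (S.ε (S.smp L M)) (𝟙 N)
      = S.smpHom (S.smpHom (𝟙 L) (S.ε M)) (𝟙 N) := by
    rw [← hr, S.counit_triangle]
  have e5 : S.γ L (S.smp M R) N ≫ S.smpHom (S.smpHom (𝟙 L) (S.ε M)) (𝟙 N)
      = S.smpHom (𝟙 L) (S.smpHom (S.ε M) (𝟙 N)) ≫ S.γ L M N := by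
    rw [gnat₂]
  slice_lhs 1 2 => rw [e1]
  slice_lhs 2 3 => rw [e2]
  slice_lhs 3 4 => rw [e3]
  slice_lhs 5 6 => rw [e4]
  slice_lhs 4 5 => rw [e5]
  simp only [hl, Category.assoc]

end RhoAux

/-- the `ρ`-part of Lemma 4.2 of Szlachányi.  Compatibility of
the canonical right `E`-actions `ρ_i` (at the `i`-th `⋆`, numbered from the
left) with the structure maps `γ`, `η`, `ε` and with `μ_N = (ε_R⋆N)∘γ_{R,R,N}`,
`δ_L = γ_{L,R,R}∘(L⋆η_R)`:
(1) `ρ_i(r) ∘ γ = γ ∘ ρ_i(r)` for `i = 1,2`;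
(2) `ρ_1(r) ∘ η_N = (r⋆N) ∘ η_N`;
(3) `ε_L ∘ ρ_1(r) = ε_L ∘ (L⋆r)`;
(4) `ρ_1(r) ∘ μ_N = μ_N ∘ ρ_2(r)`;
(5) `ρ_1(r) ∘ δ_L = δ_L ∘ ρ_1(r)`;
(6) `μ_N ∘ ρ_1(r) = μ_N ∘ (R⋆(r⋆N))`;
(7) `ρ_2(r) ∘ δ_L = ((L⋆r)⋆R) ∘ δ_L`. -/
theorem rho_compatibilities (S : RightMonoidalStruct C R) :
    (∀ (L M N : C) (r : R ⟶ R),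
        S.γ L M N ≫ S.smpHom (rhoAct S L M r) (𝟙 N)
          = rhoAct S L (S.smp M N) r ≫ S.γ L M N) ∧
    (∀ (L M N : C) (r : R ⟶ R),
        S.γ L M N ≫ rhoAct S (S.smp L M) N r
          = S.smpHom (𝟙 L) (rhoAct S M N r) ≫ S.γ L M N) ∧
    (∀ (N : C) (r : R ⟶ R),
        S.η N ≫ rhoAct S R N r = S.η N ≫ S.smpHom r (𝟙 N)) ∧
    (∀ (L : C) (r : R ⟶ R),
        rhoAct S L R r ≫ S.ε L = S.smpHom (𝟙 L) r ≫ S.ε L) ∧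
    (∀ (N : C) (r : R ⟶ R),
        S.μ N ≫ rhoAct S R N r = S.smpHom (𝟙 R) (rhoAct S R N r) ≫ S.μ N) ∧
    (∀ (L : C) (r : R ⟶ R),
        S.δ L ≫ S.smpHom (rhoAct S L R r) (𝟙 R) = rhoAct S L R r ≫ S.δ L) ∧
    (∀ (N : C) (r : R ⟶ R),
        rhoAct S R (S.smp R N) r ≫ S.μ N
          = S.smpHom (𝟙 R) (S.smpHom r (𝟙 N)) ≫ S.μ N) ∧
    (∀ (L : C) (r : R ⟶ R),
        S.δ L ≫ rhoAct S (S.smp L R) R r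
          = S.δ L ≫ S.smpHom (S.smpHom (𝟙 L) r) (𝟙 R))  := by
  classical
  refine ⟨RhoAux.rho_gamma₁ S, RhoAux.rho_gamma₂ S, RhoAux.rho_eta S, RhoAux.rho_eps S,
    ?_, ?_, ?_, ?_⟩
  · -- (4)
    intro N r
    unfold RightMonoidalStruct.μ
    have e1 : S.smpHom (S.ε R) (𝟙 N) ≫ rhoAct S R N r
        = rhoAct S (S.smp R R) N r ≫ S.smpHom (S.ε R) (𝟙 N) :=
      RhoAux.rho_nat_left S N (S.ε R) r
    have e2 : S.γ R R N ≫ rhoAct S (S.smp R R) N r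
        = S.smpHom (𝟙 R) (rhoAct S R N r) ≫ S.γ R R N := RhoAux.rho_gamma₂ S R R N r
    slice_lhs 2 3 => rw [e1]
    slice_lhs 1 2 => rw [e2]
    simp only [Category.assoc]
  · -- (5)
    intro L r
    unfold RightMonoidalStruct.δ
    have e1 : S.γ L R R ≫ S.smpHom (rhoAct S L R r) (𝟙 R)
        = rhoAct S L (S.smp R R) r ≫ S.γ L R R := RhoAux.rho_gamma₁ S L R R r
    have e2 : S.smpHom (𝟙 L) (S.η R) ≫ rhoAct S L (S.smp R R) r
        = rhoAct S L R r ≫ S.smpHom (𝟙 L) (S.η R) :=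
      RhoAux.rho_nat_right S L (S.η R) r
    slice_lhs 2 3 => rw [e1]
    slice_lhs 1 2 => rw [e2]
    simp only [Category.assoc]
  · -- (6)
    intro N r
    unfold RightMonoidalStruct.μ
    have e1 : rhoAct S R (S.smp R N) r ≫ S.γ R R N
        = S.γ R R N ≫ S.smpHom (rhoAct S R R r) (𝟙 N) :=
      (RhoAux.rho_gamma₁ S R R N r).symm
    have e2 : S.smpHom (rhoAct S R R r) (𝟙 N) ≫ S.smpHom (S.ε R) (𝟙 N)
        = S.smpHom (S.smpHom (𝟙 R) r) (𝟙 N) ≫ S.smpHom (S.ε R) (𝟙 N) := by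
      rw [← RhoAux.hr, ← RhoAux.hr, RhoAux.rho_eps]
    have e3 : S.smpHom (𝟙 R) (S.smpHom r (𝟙 N)) ≫ S.γ R R N
        = S.γ R R N ≫ S.smpHom (S.smpHom (𝟙 R) r) (𝟙 N) := RhoAux.gnat₂ S R N r
    slice_lhs 1 2 => rw [e1]
    slice_lhs 2 3 => rw [e2]
    slice_rhs 1 2 => rw [e3]
    simp only [Category.assoc]
  · -- (7)
    intro L r
    unfold RightMonoidalStruct.δ
    have e1 : S.γ L R R ≫ rhoAct S (S.smp L R) R r
        = S.smpHom (𝟙 L) (rhoAct S R R r) ≫ S.γ L R R := RhoAux.rho_gamma₂ S L R R r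
    have e2 : S.smpHom (𝟙 L) (S.η R) ≫ S.smpHom (𝟙 L) (rhoAct S R R r)
        = S.smpHom (𝟙 L) (S.η R) ≫ S.smpHom (𝟙 L) (S.smpHom r (𝟙 R)) := by
      rw [← RhoAux.hl, ← RhoAux.hl, RhoAux.rho_eta]
    have e3 : S.smpHom (𝟙 L) (S.smpHom r (𝟙 R)) ≫ S.γ L R R
        = S.γ L R R ≫ S.smpHom (S.smpHom (𝟙 L) r) (𝟙 R) := RhoAux.gnat₂ S L R r
    slice_lhs 2 3 => rw [e1]
    slice_lhs 1 2 => rw [e2]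
    slice_lhs 2 3 => rw [e3]
    simp only [Category.assoc]
end

section
/- Let ⟨M, ⋆, R, γ, η, ε⟩ be a right-monoidal category with canonical monad T = ⟨R⋆−, μ, η⟩ and canonical comonad Q = ⟨−⋆R, δ, ε⟩, and E = End(R). (a) If ⟨L, Δ_L⟩ is a Q-comodule then λ_L(r) := ε_L∘(L⋆r)∘Δ_L defines a monoid morphism E → M(L,L), every Q-comodule morphism is E-equivariant for these actions, and hence there is a faithful functor F_z : M^Q → 𝓔 acting as the identity on underlying objects and arrows. (b) Dually, if ⟨N, ∇_N⟩ is a T-module then λ_N(r) := ∇_N∘(r⋆N)∘η_N defines a monoid morphism E → M(N,N), every T-module morphism is E-equivariant, and there is a faithful functor F_q : M_T → 𝓔. -/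
open CategoryTheory

universe v u

variable {C : Type u} [Category.{v} C] {R : C}

/-- A left `E`-object in `C`, where `E = End R`: an object together with a
monoid morphism `E → End X`. -/
structure EObject (S : RightMonoidalStruct C R) where
  X : C
  act : (R ⟶ R) → (X ⟶ X)
  act_id : act (𝟙 R) = 𝟙 X
  act_comp : ∀ r r' : R ⟶ R, act (r ≫ r') = act r ≫ act r'

/-- The category `𝓔` of left `E`-objects, with `E`-equivariant arrows. -/
instance (S : RightMonoidalStruct C R) : Category (EObject S) where
  Hom A B := { t : A.X ⟶ B.X // ∀ r : R ⟶ R, A.act r ≫ t = t ≫ B.act r }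
  id A := ⟨𝟙 A.X, fun r => by simp⟩
  comp {A B D'} f g := ⟨f.1 ≫ g.1, fun r => by
    rw [← Category.assoc, f.2 r, Category.assoc, g.2 r, ← Category.assoc]⟩
  id_comp f := Subtype.ext (Category.id_comp f.1)
  comp_id f := Subtype.ext (Category.comp_id f.1)
  assoc f g h := Subtype.ext (Category.assoc f.1 g.1 h.1)

/-- The unit object `R` as a left `E`-object (with the tautological action). -/
def Runit (S : RightMonoidalStruct C R) : EObject S where
  X := R
  act r := r
  act_id := rfl
  act_comp _ _ := rfl

/-- A comodule (Eilenberg–Moore coalgebra) over the canonical comonad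
`Q = ⟨- ⋆ R, δ, ε⟩` of a right-monoidal category. -/
structure QComod (S : RightMonoidalStruct C R) where
  X : C
  coact : X ⟶ S.smp X R
  coassoc : coact ≫ S.smpHom coact (𝟙 R) = coact ≫ S.δ X
  counit : coact ≫ S.ε X = 𝟙 X

/-- The Eilenberg–Moore category `M^Q` of `Q`-comodules. -/
instance (S : RightMonoidalStruct C R) : Category (QComod S) where
  Hom A B := { t : A.X ⟶ B.X // A.coact ≫ S.smpHom t (𝟙 R) = t ≫ B.coact }
  id A := ⟨𝟙 A.X, by simp [S.smpHom_id]⟩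
  comp {A B D'} f g := ⟨f.1 ≫ g.1, by
    have : S.smpHom (f.1 ≫ g.1) (𝟙 R) = S.smpHom f.1 (𝟙 R) ≫ S.smpHom g.1 (𝟙 R) := by
      rw [← S.smpHom_comp]; simp
    rw [this, ← Category.assoc, f.2, Category.assoc, g.2, ← Category.assoc]⟩
  id_comp f := Subtype.ext (Category.id_comp f.1)
  comp_id f := Subtype.ext (Category.comp_id f.1)
  assoc f g h := Subtype.ext (Category.assoc f.1 g.1 h.1)

/-- A module (Eilenberg–Moore algebra) over the canonical monad
`T = ⟨R ⋆ -, μ, η⟩` of a right-monoidal category. -/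
structure TMod (S : RightMonoidalStruct C R) where
  X : C
  act : S.smp R X ⟶ X
  assoc : S.smpHom (𝟙 R) act ≫ act = S.μ X ≫ act
  unit : S.η X ≫ act = 𝟙 X

/-- The Eilenberg–Moore category `M_T` of `T`-modules. -/
instance (S : RightMonoidalStruct C R) : Category (TMod S) where
  Hom A B := { t : A.X ⟶ B.X // A.act ≫ t = S.smpHom (𝟙 R) t ≫ B.act }
  id A := ⟨𝟙 A.X, by simp [S.smpHom_id]⟩
  comp {A B D'} f g := ⟨f.1 ≫ g.1, by
    have : S.smpHom (𝟙 R) (f.1 ≫ g.1) = S.smpHom (𝟙 R) f.1 ≫ S.smpHom (𝟙 R) g.1 := by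
      rw [← S.smpHom_comp]; simp
    rw [this, ← Category.assoc, f.2, Category.assoc, g.2, ← Category.assoc]⟩
  id_comp f := Subtype.ext (Category.id_comp f.1)
  comp_id f := Subtype.ext (Category.comp_id f.1)
  assoc f g h := Subtype.ext (Category.assoc f.1 g.1 h.1)

/-- The left `E`-action `λ_L(r) := ε_L ∘ (L ⋆ r) ∘ Δ_L` induced on a `Q`-comodule. -/
def lamQ (S : RightMonoidalStruct C R) (L : QComod S) (r : R ⟶ R) : L.X ⟶ L.X :=
  L.coact ≫ S.smpHom (𝟙 L.X) r ≫ S.ε L.X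

/-- The left `E`-action `λ_N(r) := ∇_N ∘ (r ⋆ N) ∘ η_N` induced on a `T`-module. -/
def lamT (S : RightMonoidalStruct C R) (N : TMod S) (r : R ⟶ R) : N.X ⟶ N.X :=
  S.η N.X ≫ S.smpHom r (𝟙 N.X) ≫ N.act

/-!
The coaction of a `Q`-comodule intertwines `λ_L(r)` with `L ⋆ r`, and the action of a `T`-module
intertwines `λ_N(r)` with `r ⋆ N`. Both follow from (co)associativity, the triangle axioms and the
identity `ε_R ∘ (s ⋆ r) ∘ η_R = s ∘ r` in `E`. Multiplicativity of `λ` is then immediate, and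
equivariance of (co)module morphisms is naturality of `ε` and `η`.
-/

namespace RightMonoidalStruct

variable (S : RightMonoidalStruct C R)

lemma smpHom_id_comp {X Y Y' Y'' : C} (g : Y ⟶ Y') (g' : Y' ⟶ Y'') :
    S.smpHom (𝟙 X) (g ≫ g') = S.smpHom (𝟙 X) g ≫ S.smpHom (𝟙 X) g' := by
  rw [← S.smpHom_comp, Category.id_comp]

lemma smpHom_comp_id {X X' X'' Y : C} (f : X ⟶ X') (f' : X' ⟶ X'') :
    S.smpHom (f ≫ f') (𝟙 Y) = S.smpHom f (𝟙 Y) ≫ S.smpHom f' (𝟙 Y) := by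
  rw [← S.smpHom_comp, Category.id_comp]

lemma smpHom_def' {X X' Y Y' : C} (f : X ⟶ X') (g : Y ⟶ Y') :
    S.smpHom f g = S.smpHom (𝟙 X) g ≫ S.smpHom f (𝟙 Y') := by
  rw [← S.smpHom_comp, Category.id_comp, Category.comp_id]

lemma smpHom_exchange {X X' Y Y' : C} (f : X ⟶ X') (g : Y ⟶ Y') :
    S.smpHom f (𝟙 Y) ≫ S.smpHom (𝟙 X') g = S.smpHom (𝟙 X) g ≫ S.smpHom f (𝟙 Y') := by
  rw [← S.smpHom_comp, ← smpHom_def', Category.id_comp, Category.comp_id]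

lemma η_comp_smpHom_comp_ε (r s : R ⟶ R) : S.η R ≫ S.smpHom s r ≫ S.ε R = r ≫ s :=
  calc S.η R ≫ S.smpHom s r ≫ S.ε R
      = (S.η R ≫ S.smpHom (𝟙 R) r) ≫ S.smpHom s (𝟙 R) ≫ S.ε R := by
        rw [smpHom_def', Category.assoc, Category.assoc]
    _ = r ≫ (S.η R ≫ S.ε R) ≫ s := by
        rw [← S.η_natural, S.ε_natural]; simp only [Category.assoc]
    _ = r ≫ s := by rw [S.unit_counit, Category.id_comp]

end RightMonoidalStruct

section

open RightMonoidalStruct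

variable (S : RightMonoidalStruct C R)

lemma lamQ_comp_coact (L : QComod S) (r : R ⟶ R) :
    lamQ S L r ≫ L.coact = L.coact ≫ S.smpHom (𝟙 L.X) r :=
  calc lamQ S L r ≫ L.coact
      = (L.coact ≫ S.smpHom L.coact (𝟙 R)) ≫ S.smpHom (𝟙 _) r ≫ S.ε _ := by
        rw [lamQ, Category.assoc, Category.assoc, ← S.ε_natural,
          ← reassoc_of% S.smpHom_exchange, Category.assoc]
    _ = L.coact ≫ S.smpHom (𝟙 L.X) (S.η R) ≫ S.smpHom (𝟙 L.X) (S.smpHom (𝟙 R) r) ≫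
          S.γ L.X R R ≫ S.ε _ := by
        have hγ := S.γ_natural (𝟙 L.X) (𝟙 R) r
        rw [S.smpHom_id] at hγ
        rw [L.coassoc, δ, Category.assoc, Category.assoc, ← reassoc_of% hγ]
    _ = L.coact ≫ S.smpHom (𝟙 L.X) r := by
        rw [S.counit_triangle, ← S.smpHom_id_comp, ← S.smpHom_id_comp, η_comp_smpHom_comp_ε,
          Category.comp_id]

lemma act_comp_lamT (N : TMod S) (r : R ⟶ R) :
    N.act ≫ lamT S N r = S.smpHom r (𝟙 N.X) ≫ N.act :=
  calc N.act ≫ lamT S N r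
      = S.η _ ≫ S.smpHom r (𝟙 _) ≫ S.smpHom (𝟙 R) N.act ≫ N.act := by
        rw [lamT, reassoc_of% S.η_natural, reassoc_of% S.smpHom_exchange]
    _ = S.η _ ≫ S.γ R R N.X ≫ S.smpHom (S.smpHom r (𝟙 R)) (𝟙 N.X) ≫
          S.smpHom (S.ε R) (𝟙 N.X) ≫ N.act := by
        have hγ := S.γ_natural r (𝟙 R) (𝟙 N.X)
        rw [S.smpHom_id] at hγ
        rw [N.assoc, μ, Category.assoc, reassoc_of% hγ]
    _ = S.smpHom r (𝟙 N.X) ≫ N.act := by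
        rw [reassoc_of% S.unit_triangle, ← reassoc_of% S.smpHom_comp_id,
          ← reassoc_of% S.smpHom_comp_id, Category.assoc, η_comp_smpHom_comp_ε, Category.id_comp]

lemma lamQ_id (L : QComod S) : lamQ S L (𝟙 R) = 𝟙 L.X := by
  rw [lamQ, S.smpHom_id, Category.id_comp, L.counit]

lemma lamQ_comp (L : QComod S) (r r' : R ⟶ R) :
    lamQ S L (r ≫ r') = lamQ S L r ≫ lamQ S L r' := by
  rw [lamQ, S.smpHom_id_comp, Category.assoc, ← reassoc_of% lamQ_comp_coact]
  rfl

lemma lamQ_naturality {K L : QComod S} (t : K ⟶ L) (r : R ⟶ R) :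
    lamQ S K r ≫ t.1 = t.1 ≫ lamQ S L r := by
  rw [lamQ, lamQ, Category.assoc, Category.assoc, ← S.ε_natural,
    ← reassoc_of% S.smpHom_exchange, reassoc_of% t.2]

lemma lamT_id (N : TMod S) : lamT S N (𝟙 R) = 𝟙 N.X := by
  rw [lamT, S.smpHom_id, Category.id_comp, N.unit]

lemma lamT_comp (N : TMod S) (r r' : R ⟶ R) :
    lamT S N (r ≫ r') = lamT S N r ≫ lamT S N r' := by
  rw [lamT, S.smpHom_comp_id, Category.assoc, ← act_comp_lamT]
  simp only [lamT, Category.assoc]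

lemma lamT_naturality {M N : TMod S} (t : M ⟶ N) (r : R ⟶ R) :
    lamT S M r ≫ t.1 = t.1 ≫ lamT S N r := by
  rw [lamT, lamT, Category.assoc, Category.assoc, t.2, reassoc_of% S.smpHom_exchange,
    reassoc_of% S.η_natural]

def QComod.toEObject : QComod S ⥤ EObject S where
  obj L := ⟨L.X, lamQ S L, lamQ_id S L, lamQ_comp S L⟩
  map t := ⟨t.1, lamQ_naturality S t⟩

instance : (QComod.toEObject S).Faithful :=
  ⟨fun h => Subtype.ext (congrArg (fun f => f.1) h)⟩

def TMod.toEObject : TMod S ⥤ EObject S where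
  obj N := ⟨N.X, lamT S N, lamT_id S N, lamT_comp S N⟩
  map t := ⟨t.1, lamT_naturality S t⟩

instance : (TMod.toEObject S).Faithful :=
  ⟨fun h => Subtype.ext (congrArg (fun f => f.1) h)⟩

end

/-- Lemma 5.1 of Szlachányi.  (a) On any `Q`-comodule `L`,
`λ_L(r) := ε_L ∘ (L ⋆ r) ∘ Δ_L` is a monoid morphism `E = End R → End L`,
every `Q`-comodule morphism is `E`-equivariant, and hence there is a faithful
functor `F_z : M^Q → 𝓔` acting as the identity on underlying objects and
arrows.  (b) Dually for `T`-modules with `λ_N(r) := ∇_N ∘ (r ⋆ N) ∘ η_N`,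
yielding a faithful functor `F_q : M_T → 𝓔`. -/
theorem comodules_and_modules_are_E_objects (S : RightMonoidalStruct C R) :
    (∀ L : QComod S, lamQ S L (𝟙 R) = 𝟙 L.X) ∧
    (∀ (L : QComod S) (r r' : R ⟶ R), lamQ S L (r ≫ r') = lamQ S L r ≫ lamQ S L r') ∧
    (∀ {K L : QComod S} (t : K ⟶ L) (r : R ⟶ R),
        lamQ S K r ≫ t.1 = t.1 ≫ lamQ S L r) ∧
    (∀ N : TMod S, lamT S N (𝟙 R) = 𝟙 N.X) ∧
    (∀ (N : TMod S) (r r' : R ⟶ R), lamT S N (r ≫ r') = lamT S N r ≫ lamT S N r') ∧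
    (∀ {M N : TMod S} (t : M ⟶ N) (r : R ⟶ R),
        lamT S M r ≫ t.1 = t.1 ≫ lamT S N r) ∧
    (∃ Fz : QComod S ⥤ EObject S, Fz.Faithful ∧
      ∃ hobj : ∀ L : QComod S, (Fz.obj L).X = L.X,
        (∀ (L : QComod S) (r : R ⟶ R),
            (Fz.obj L).act r = eqToHom (hobj L) ≫ lamQ S L r ≫ eqToHom (hobj L).symm) ∧
        (∀ {K L : QComod S} (t : K ⟶ L),
            (Fz.map t).1 = eqToHom (hobj K) ≫ t.1 ≫ eqToHom (hobj L).symm)) ∧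
    (∃ Fq : TMod S ⥤ EObject S, Fq.Faithful ∧
      ∃ hobj : ∀ N : TMod S, (Fq.obj N).X = N.X,
        (∀ (N : TMod S) (r : R ⟶ R),
            (Fq.obj N).act r = eqToHom (hobj N) ≫ lamT S N r ≫ eqToHom (hobj N).symm) ∧
        (∀ {M N : TMod S} (t : M ⟶ N),
            (Fq.map t).1 = eqToHom (hobj M) ≫ t.1 ≫ eqToHom (hobj N).symm)) := by
  refine ⟨lamQ_id S, lamQ_comp S, lamQ_naturality S, lamT_id S, lamT_comp S, lamT_naturality S,
    ⟨QComod.toEObject S, inferInstance, fun _ => rfl, fun _ _ => ?_, fun _ => ?_⟩,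
    ⟨TMod.toEObject S, inferInstance, fun _ => rfl, fun _ _ => ?_, fun _ => ?_⟩⟩ <;>
    exact ((Category.id_comp _).trans (Category.comp_id _)).symm
end

section
/- Let ⟨M, ⋆, R, γ, η, ε⟩ be a right-monoidal category whose underlying category M is complete, let 𝐐 be the canonical lax comonad on the category 𝓔 of left E-objects constructed from the joint equalizers ζ^n_M : φ𝐐_nM → Q^nφM, and let ⟨φ, ζ⟩ be the associated morphism of lax comonads from ⟨𝓔, 𝐐⟩ to ⟨M, Q⟩. Then the induced functor φ̂ : 𝓔^𝐐 → M^Q, sending a 𝐐-comodule ⟨M, α⟩ to ⟨φM, (ζ^n_M∘φα_n)_{n≥0}⟩ (equivalently to the Q-comodule with coaction ζ^1_M∘φα_1), is an equivalence of categories between the category of 𝐐-comodules and the Eilenberg–Moore category of Q-comodules. -/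
open CategoryTheory

universe v u

variable {C : Type u} [Category.{v} C] {R : C}

/-- Iterated application of the canonical comonad `Q = - ⋆ R`:
`Qpow n X = (…(X ⋆ R) ⋆ … ) ⋆ R` with `n` factors of `R`. -/
def Qpow (S : RightMonoidalStruct C R) : ℕ → C → C
  | 0, X => X
  | n+1, X => S.smp (Qpow S n X) R

/-- `Q^k` applied to a morphism. -/
def Qiter (S : RightMonoidalStruct C R) :
    (k : ℕ) → ∀ {X Y : C}, (X ⟶ Y) → (Qpow S k X ⟶ Qpow S k Y)
  | 0, _, _, f => f
  | k+1, _, _, f => S.smpHom (Qiter S k f) (𝟙 R)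

/-- `Q^m Q^n = Q^{m+n}`. -/
theorem Qpow_comp (S : RightMonoidalStruct C R) (m n : ℕ) (X : C) :
    Qpow S m (Qpow S n X) = Qpow S (m + n) X := by
  induction m with
  | zero => rw [Nat.zero_add]; rfl
  | succ m ih =>
      show S.smp (Qpow S m (Qpow S n X)) R = _
      rw [ih, Nat.succ_add]
      rfl

/-- The face-type structure maps of the strict lax comonad determined by `Q`:
`dS n i : Q^{n+1} → Q^{n+2}` is `Q^i δ Q^{n-i}` (here `i ≤ n` counts the number
of outer `Q`'s). -/
def dS (S : RightMonoidalStruct C R) : (n i : ℕ) → (X : C) →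
    (Qpow S (n+1) X ⟶ Qpow S (n+2) X)
  | n, 0, X => S.δ (Qpow S n X)
  | 0, _+1, X => S.δ (Qpow S 0 X)
  | n+1, i+1, X => S.smpHom (dS S n i X) (𝟙 R)

/-- `eS n i : Q^{n+1} → Q^n` is `Q^i ε Q^{n-i}` (with `i ≤ n` outer `Q`'s). -/
def eS (S : RightMonoidalStruct C R) : (n i : ℕ) → (X : C) →
    (Qpow S (n+1) X ⟶ Qpow S n X)
  | n, 0, X => S.ε (Qpow S n X)
  | 0, _+1, X => S.ε (Qpow S 0 X)
  | n+1, i+1, X => S.smpHom (eS S n i X) (𝟙 R)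

/-- The left `E`-action `λ_j` on the `j`-th operand (counted from the left,
`0`-based; the `0`-th operand is `M` itself, acted on via `λ_M`) of
`Q^n(φM) = (…(M ⋆ R) ⋆ …) ⋆ R`. -/
def lamAt (S : RightMonoidalStruct C R) :
    (n j : ℕ) → (M : EObject S) → (R ⟶ R) → (Qpow S n M.X ⟶ Qpow S n M.X)
  | 0, _, M, r => M.act r
  | n+1, j, M, r =>
      if j = n + 1 then S.smpHom (𝟙 (Qpow S n M.X)) r
      else S.smpHom (lamAt S n j M r) (𝟙 R)

/-- The canonical right `E`-action `ρ_i` at the `i`-th `⋆` (counted from the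
left, `0`-based) of `Q^{n+1} X`. -/
def rhoAtQ (S : RightMonoidalStruct C R) :
    (n i : ℕ) → (X : C) → (R ⟶ R) → (Qpow S (n+1) X ⟶ Qpow S (n+1) X)
  | 0, _, X, r => rhoAct S X R r
  | n+1, i, X, r =>
      if i = n + 1 then rhoAct S (Qpow S (n+1) X) R r
      else S.smpHom (rhoAtQ S n i X r) (𝟙 R)

/-- `ρ_i` on `Q^n X`, with junk value the identity when `n = 0`. -/
def rhoAt' (S : RightMonoidalStruct C R) :
    (n i : ℕ) → (X : C) → (R ⟶ R) → (Qpow S n X ⟶ Qpow S n X)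
  | 0, _, X, _ => 𝟙 X
  | n+1, i, X, r => rhoAtQ S n i X r

/-- Bare endofunctor data on a category. -/
structure EndoData (E : Type*) [Category E] where
  obj : E → E
  map : ∀ {X Y : E}, (X ⟶ Y) → (obj X ⟶ obj Y)
  map_id : ∀ X : E, map (𝟙 X) = 𝟙 (obj X)
  map_comp : ∀ {X Y Z : E} (f : X ⟶ Y) (g : Y ⟶ Z), map (f ≫ g) = map f ≫ map g

/-- A lax comonad on `E`, i.e. a monoidal functor `Δ^op → End E` from the
(augmented) simplex category with ordinal sum, presented by the generating
maps: endofunctors `G n`, transformations `d n i : G (n+1) → G (n+2)` (the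
images of the surjections `[n+2] → [n+1]` of `Δ`, `i ≤ n`) and
`e n i : G (n+1) → G n` (the images of the injections `[n] → [n+1]`, `i ≤ n`)
subject to the simplicial identities, together with the monoidal structure
`ν m n : G m ∘ G n → G (m+n)` and `ι : id → G 0` subject to associativity,
unitality and naturality in `(m, n) ∈ Δ^op × Δ^op`. -/
structure LaxComonadStr {E : Type*} [Category E] (G : ℕ → EndoData E) where
  d : ∀ (n i : ℕ) (X : E), (G (n+1)).obj X ⟶ (G (n+2)).obj X
  e : ∀ (n i : ℕ) (X : E), (G (n+1)).obj X ⟶ (G n).obj X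
  ν : ∀ (m n : ℕ) (X : E), (G m).obj ((G n).obj X) ⟶ (G (m+n)).obj X
  ι : ∀ X : E, X ⟶ (G 0).obj X
  d_natural : ∀ (n i : ℕ) {X Y : E} (f : X ⟶ Y), i ≤ n →
      (G (n+1)).map f ≫ d n i Y = d n i X ≫ (G (n+2)).map f
  e_natural : ∀ (n i : ℕ) {X Y : E} (f : X ⟶ Y), i ≤ n →
      (G (n+1)).map f ≫ e n i Y = e n i X ≫ (G n).map f
  ν_natural : ∀ (m n : ℕ) {X Y : E} (f : X ⟶ Y),
      (G m).map ((G n).map f) ≫ ν m n Y = ν m n X ≫ (G (m+n)).map f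
  ι_natural : ∀ {X Y : E} (f : X ⟶ Y), f ≫ ι Y = ι X ≫ (G 0).map f
  dd : ∀ (n i j : ℕ) (X : E), i ≤ j → j ≤ n →
      d n j X ≫ d (n+1) i X = d n i X ≫ d (n+1) (j+1) X
  ee : ∀ (n i j : ℕ) (X : E), i ≤ j → j ≤ n →
      e (n+1) (j+1) X ≫ e n i X = e (n+1) i X ≫ e n j X
  de₁ : ∀ (n i j : ℕ) (X : E), i ≤ j → j ≤ n →
      d (n+1) (j+1) X ≫ e (n+2) i X = e (n+1) i X ≫ d n j X
  de₂ : ∀ (n j : ℕ) (X : E), j ≤ n → d n j X ≫ e (n+1) j X = 𝟙 ((G (n+1)).obj X)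
  de₃ : ∀ (n j : ℕ) (X : E), j ≤ n → d n j X ≫ e (n+1) (j+1) X = 𝟙 ((G (n+1)).obj X)
  de₄ : ∀ (n i j : ℕ) (X : E), j < i → i ≤ n + 1 →
      d (n+1) j X ≫ e (n+2) (i+1) X = e (n+1) i X ≫ d n j X
  ν_assoc : ∀ (l m n : ℕ) (X : E),
      ν l m ((G n).obj X) ≫ ν (l+m) n X
        = (G l).map (ν m n X) ≫ ν l (m+n) X
            ≫ eqToHom (congrArg (fun k => (G k).obj X) (by omega : l + (m + n) = l + m + n))
  ν_unit_left : ∀ (n : ℕ) (X : E),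
      ι ((G n).obj X) ≫ ν 0 n X
        = eqToHom (congrArg (fun k => (G k).obj X) (by omega : n = 0 + n))
  ν_unit_right : ∀ (m : ℕ) (X : E),
      (G m).map (ι X) ≫ ν m 0 X = 𝟙 ((G m).obj X)
  ν_d_left : ∀ (m n i : ℕ) (X : E), i ≤ m →
      ν (m+1) n X
          ≫ eqToHom (congrArg (fun k => (G k).obj X) (by omega : m + 1 + n = m + n + 1))
          ≫ d (m+n) i X
        = d m i ((G n).obj X) ≫ ν (m+2) n X
            ≫ eqToHom (congrArg (fun k => (G k).obj X) (by omega : m + 2 + n = m + n + 2))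
  ν_d_right : ∀ (m n j : ℕ) (X : E), j ≤ n →
      ν m (n+1) X ≫ d (m+n) (m+j) X = (G m).map (d n j X) ≫ ν m (n+2) X
  ν_e_left : ∀ (m n i : ℕ) (X : E), i ≤ m →
      ν (m+1) n X
          ≫ eqToHom (congrArg (fun k => (G k).obj X) (by omega : m + 1 + n = m + n + 1))
          ≫ e (m+n) i X
        = e m i ((G n).obj X) ≫ ν m n X
  ν_e_right : ∀ (m n j : ℕ) (X : E), j ≤ n →
      ν m (n+1) X ≫ e (m+n) (m+j) X = (G m).map (e n j X) ≫ ν m n X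

/-- A comodule over a lax comonad `G : Δ^op → End E`: an object with coactions
`α_n : X → G_n X` compatible with the simplicial maps, the monoidal structure
`ν` and the unit `ι`. -/
structure LaxComod {E : Type*} [Category E] {G : ℕ → EndoData E}
    (Lc : LaxComonadStr G) where
  pt : E
  α : ∀ n : ℕ, pt ⟶ (G n).obj pt
  compat_d : ∀ n i : ℕ, i ≤ n → α (n+1) ≫ Lc.d n i pt = α (n+2)
  compat_e : ∀ n i : ℕ, i ≤ n → α (n+1) ≫ Lc.e n i pt = α n
  compat_ν : ∀ m n : ℕ, α m ≫ (G m).map (α n) ≫ Lc.ν m n pt = α (m+n)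
  compat_ι : α 0 = Lc.ι pt

/-- The Eilenberg–Moore category `E^G` of comodules over a lax comonad. -/
instance {E : Type*} [Category E] {G : ℕ → EndoData E} (Lc : LaxComonadStr G) :
    Category (LaxComod Lc) where
  Hom A B := { t : A.pt ⟶ B.pt // ∀ n : ℕ, t ≫ B.α n = A.α n ≫ (G n).map t }
  id A := ⟨𝟙 A.pt, fun n => by simp [(G n).map_id]⟩
  comp {A B D'} f g := ⟨f.1 ≫ g.1, fun n => by
    rw [(G n).map_comp, Category.assoc, g.2 n, ← Category.assoc, f.2 n, Category.assoc]⟩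
  id_comp f := Subtype.ext (Category.id_comp f.1)
  comp_id f := Subtype.ext (Category.comp_id f.1)
  assoc f g h := Subtype.ext (Category.assoc f.1 g.1 h.1)

/-!
A `𝐐`-comodule `⟨M, α⟩` is determined by the single coaction `Δ = ζ¹ ∘ α₁`: the monoidal
structure `ν` forces `ζⁿ ∘ α_n = Δⁿ` (the `n`-fold iterate of `Δ`), the simplicial maps make `Δ` a
`Q`-comodule, and the `E`-action is recovered as `ε ∘ (M ⋆ r) ∘ Δ`. Conversely, for any
`Q`-comodule `⟨B, Δ⟩`, the action `r ↦ ε ∘ (B ⋆ r) ∘ Δ` makes `B` an `E`-object, and coassociativity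
shows that `Δⁿ` equalizes every pair `λ_j(r), ρ_j(r)`, so it factors uniquely through `ζⁿ`; these
factorizations form a `𝐐`-comodule, because `ζ` is jointly monic.
-/

attribute [reducible] Qpow

namespace RightMonoidalStruct

variable (S : RightMonoidalStruct C R)

lemma smpHom_comp_left {X Y Z W : C} (f : X ⟶ Y) (g : Y ⟶ Z) :
    S.smpHom (f ≫ g) (𝟙 W) = S.smpHom f (𝟙 W) ≫ S.smpHom g (𝟙 W) := by
  rw [← S.smpHom_comp, Category.comp_id]

lemma smpHom_comp_right {X Y Z W : C} (f : X ⟶ Y) (g : Y ⟶ Z) :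
    S.smpHom (𝟙 W) (f ≫ g) = S.smpHom (𝟙 W) f ≫ S.smpHom (𝟙 W) g := by
  rw [← S.smpHom_comp, Category.comp_id]

lemma smpHom_eqToHom {X Y : C} (h : X = Y) :
    S.smpHom (eqToHom h) (𝟙 R) = eqToHom (congrArg (fun Z => S.smp Z R) h) := by
  subst h; simp [S.smpHom_id]

lemma δ_comp_ε (Y : C) : S.δ Y ≫ S.ε (S.smp Y R) = 𝟙 (S.smp Y R) := by
  rw [δ, Category.assoc, S.counit_triangle, ← S.smpHom_comp, S.unit_counit,
    Category.id_comp, S.smpHom_id]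

lemma δ_comp_smpHom_id (Y : C) (r : R ⟶ R) :
    S.δ Y ≫ S.smpHom (𝟙 (S.smp Y R)) r = S.smpHom (𝟙 Y) r ≫ S.δ Y := by
  have h := S.γ_natural (𝟙 Y) (𝟙 R) r
  rw [S.smpHom_id] at h
  rw [δ, Category.assoc, ← h, ← Category.assoc, ← Category.assoc, ← S.smpHom_comp_right,
    ← S.smpHom_comp_right, ← S.η_natural]

lemma δ_natural {X Y : C} (f : X ⟶ Y) :
    S.smpHom f (𝟙 R) ≫ S.δ Y = S.δ X ≫ S.smpHom (S.smpHom f (𝟙 R)) (𝟙 R) := by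
  have h := S.γ_natural f (𝟙 R) (𝟙 R)
  rw [S.smpHom_id] at h
  rw [δ, δ, ← Category.assoc, S.smpHom_exchange, Category.assoc, h, Category.assoc]

/-- The pentagon at `(Y, R, R, R)`, after the unit triangle has rewritten
`(η_R ⋆ R) ∘ η_R` as `γ_{R,R,R} ∘ (R ⋆ η_R) ∘ η_R`. -/
lemma δ_coassoc (Y : C) :
    S.δ Y ≫ S.smpHom (S.δ Y) (𝟙 R) = S.δ Y ≫ S.δ (S.smp Y R) := by
  have hη : S.η R ≫ S.smpHom (𝟙 R) (S.η R) ≫ S.γ R R R = S.η R ≫ S.smpHom (S.η R) (𝟙 R) := by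
    rw [← Category.assoc, ← S.η_natural (S.η R), Category.assoc, S.unit_triangle]
  have nat₁ := S.γ_natural (𝟙 Y) (𝟙 R) (S.η R)
  have nat₂ := S.γ_natural (𝟙 Y) (S.η R) (𝟙 R)
  rw [S.smpHom_id] at nat₁
  calc S.δ Y ≫ S.smpHom (S.δ Y) (𝟙 R)
      = S.smpHom (𝟙 Y) (S.η R ≫ S.smpHom (S.η R) (𝟙 R))
          ≫ S.γ Y (S.smp R R) R ≫ S.smpHom (S.γ Y R R) (𝟙 R) := by
        rw [δ, S.smpHom_comp_left, S.smpHom_comp_right, Category.assoc, Category.assoc,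
          reassoc_of% nat₂]
    _ = S.smpHom (𝟙 Y) (S.η R) ≫ S.smpHom (𝟙 Y) (S.smpHom (𝟙 R) (S.η R))
          ≫ S.smpHom (𝟙 Y) (S.γ R R R) ≫ S.γ Y (S.smp R R) R
          ≫ S.smpHom (S.γ Y R R) (𝟙 R) := by
        rw [← hη, S.smpHom_comp_right, S.smpHom_comp_right, Category.assoc, Category.assoc]
    _ = S.δ Y ≫ S.δ (S.smp Y R) := by
        rw [S.pentagon, δ, δ, Category.assoc, ← reassoc_of% nat₁]

end RightMonoidalStruct

section Iterates

variable (S : RightMonoidalStruct C R)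

lemma Qiter_comp (k : ℕ) {X Y Z : C} (f : X ⟶ Y) (g : Y ⟶ Z) :
    Qiter S k (f ≫ g) = Qiter S k f ≫ Qiter S k g := by
  induction k with
  | zero => rfl
  | succ k ih => exact (congrArg (S.smpHom · (𝟙 R)) ih).trans (S.smpHom_comp_left _ _)

def iterCoact {X : C} (Δ : X ⟶ S.smp X R) : (n : ℕ) → (X ⟶ Qpow S n X)
  | 0 => 𝟙 X
  | n+1 => Δ ≫ S.smpHom (iterCoact Δ n) (𝟙 R)

variable {X : C} (Δ : X ⟶ S.smp X R)

@[simp] lemma iterCoact_zero : iterCoact S Δ 0 = 𝟙 X := rfl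

lemma iterCoact_succ (n : ℕ) :
    iterCoact S Δ (n+1) = Δ ≫ S.smpHom (iterCoact S Δ n) (𝟙 R) := rfl

@[simp] lemma iterCoact_one : iterCoact S Δ 1 = Δ := by
  rw [iterCoact_succ, iterCoact_zero, S.smpHom_id, Category.comp_id]

lemma iterCoact_comp_eqToHom {a b : ℕ} (h : a = b) (e : Qpow S a X = Qpow S b X) :
    iterCoact S Δ a ≫ eqToHom e = iterCoact S Δ b := by
  subst h; simp

lemma iterCoact_comp_Qiter_iterCoact (m k : ℕ) :
    iterCoact S Δ m ≫ Qiter S m (iterCoact S Δ k) ≫ eqToHom (Qpow_comp S m k X)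
      = iterCoact S Δ (m+k) := by
  induction m with
  | zero => exact (Category.id_comp _).trans (iterCoact_comp_eqToHom S Δ (Nat.zero_add k).symm _)
  | succ m ih =>
      have ih' : iterCoact S Δ m ≫ Qiter S m (iterCoact S Δ k)
          = iterCoact S Δ (m+k) ≫ eqToHom (Qpow_comp S m k X).symm := by
        rw [← ih]; simp
      calc iterCoact S Δ (m+1) ≫ Qiter S (m+1) (iterCoact S Δ k) ≫ eqToHom _
          = Δ ≫ S.smpHom (iterCoact S Δ m ≫ Qiter S m (iterCoact S Δ k)) (𝟙 R)
              ≫ eqToHom (Qpow_comp S (m+1) k X) := by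
            rw [iterCoact_succ, S.smpHom_comp_left, Category.assoc, Category.assoc]; rfl
        _ = iterCoact S Δ (m+k+1) ≫ eqToHom (congrArg (Qpow S · X) (Nat.add_right_comm m k 1)) := by
            rw [ih', S.smpHom_comp_left, S.smpHom_eqToHom, iterCoact_succ]
            simp only [Category.assoc, eqToHom_trans]
        _ = iterCoact S Δ (m+1+k) := iterCoact_comp_eqToHom S Δ (by omega) _

lemma iterCoact_comp_Qiter (n : ℕ) :
    iterCoact S Δ n ≫ Qiter S n Δ ≫ eqToHom (Qpow_comp S n 1 X) = iterCoact S Δ (n+1) := by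
  simpa using iterCoact_comp_Qiter_iterCoact S Δ n 1

lemma iterCoact_naturality {Y : C} (Δ' : Y ⟶ S.smp Y R) (f : X ⟶ Y)
    (hf : Δ ≫ S.smpHom f (𝟙 R) = f ≫ Δ') (n : ℕ) :
    f ≫ iterCoact S Δ' n = iterCoact S Δ n ≫ Qiter S n f := by
  induction n with
  | zero => exact (Category.comp_id f).trans (Category.id_comp f).symm
  | succ n ih =>
      rw [iterCoact_succ, iterCoact_succ, ← reassoc_of% hf, ← S.smpHom_comp_left, ih,
        S.smpHom_comp_left, Category.assoc]
      rfl

end Iterates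

namespace QComod

variable {S : RightMonoidalStruct C R} (B : QComod S)

def act (r : R ⟶ R) : B.X ⟶ B.X := B.coact ≫ S.smpHom (𝟙 B.X) r ≫ S.ε B.X

lemma act_comp_coact (r : R ⟶ R) : B.act r ≫ B.coact = B.coact ≫ S.smpHom (𝟙 B.X) r := by
  calc B.act r ≫ B.coact
      = B.coact ≫ S.smpHom (𝟙 B.X) r ≫ S.smpHom B.coact (𝟙 R) ≫ S.ε (S.smp B.X R) := by
        rw [act, Category.assoc, Category.assoc, S.ε_natural]
    _ = B.coact ≫ S.δ B.X ≫ S.smpHom (𝟙 (S.smp B.X R)) r ≫ S.ε (S.smp B.X R) := by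
        rw [← reassoc_of% S.smpHom_exchange, reassoc_of% B.coassoc]
    _ = B.coact ≫ S.smpHom (𝟙 B.X) r := by
        rw [reassoc_of% S.δ_comp_smpHom_id, S.δ_comp_ε, Category.comp_id]

lemma act_id : B.act (𝟙 R) = 𝟙 B.X := by
  rw [act, S.smpHom_id, Category.id_comp, B.counit]

lemma act_comp (r r' : R ⟶ R) : B.act (r ≫ r') = B.act r ≫ B.act r' := by
  rw [act, S.smpHom_comp_right, Category.assoc, ← reassoc_of% B.act_comp_coact]
  rfl

abbrev toEObject_s10 : EObject S := ⟨B.X, B.act, B.act_id, B.act_comp⟩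

lemma act_comp_hom {B' : QComod S} (t : B ⟶ B') (r : R ⟶ R) :
    B.act r ≫ t.1 = t.1 ≫ B'.act r := by
  calc B.act r ≫ t.1
      = B.coact ≫ S.smpHom t.1 (𝟙 R) ≫ S.smpHom (𝟙 B'.X) r ≫ S.ε B'.X := by
        rw [act, Category.assoc, Category.assoc, ← S.ε_natural, reassoc_of% S.smpHom_exchange]
    _ = t.1 ≫ B'.act r := by rw [reassoc_of% t.2, act]

lemma coact_comp_smpHom_act (r : R ⟶ R) :
    B.coact ≫ S.smpHom (B.act r) (𝟙 R) = B.coact ≫ rhoAct S B.X R r := by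
  have nat := S.γ_natural (𝟙 B.X) r (𝟙 R)
  calc B.coact ≫ S.smpHom (B.act r) (𝟙 R)
      = B.coact ≫ S.δ B.X ≫ S.smpHom (S.smpHom (𝟙 B.X) r) (𝟙 R) ≫ S.smpHom (S.ε B.X) (𝟙 R) := by
        rw [act, S.smpHom_comp_left, S.smpHom_comp_left, reassoc_of% B.coassoc]
    _ = B.coact ≫ rhoAct S B.X R r := by
        rw [RightMonoidalStruct.δ, rhoAct, Category.assoc, reassoc_of% nat]

variable (S) in
def cofree (Y : C) : QComod S := ⟨S.smp Y R, S.δ Y, S.δ_coassoc Y, S.δ_comp_ε Y⟩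

lemma cofree_act (Y : C) (r : R ⟶ R) : (cofree S Y).act r = S.smpHom (𝟙 Y) r := by
  show S.δ Y ≫ S.smpHom (𝟙 (S.smp Y R)) r ≫ S.ε (S.smp Y R) = _
  rw [← Category.assoc, S.δ_comp_smpHom_id, Category.assoc, S.δ_comp_ε,
    Category.comp_id]

variable (S) in
lemma δ_comp_rhoAct (Y : C) (r : R ⟶ R) :
    S.δ Y ≫ S.smpHom (S.smpHom (𝟙 Y) r) (𝟙 R) = S.δ Y ≫ rhoAct S (S.smp Y R) R r := by
  have h := (cofree S Y).coact_comp_smpHom_act r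
  rw [cofree_act] at h
  exact h

lemma iterCoact_add_two (n : ℕ) :
    iterCoact S B.coact (n+2) = iterCoact S B.coact (n+1) ≫ S.δ (Qpow S n B.X) := by
  rw [iterCoact_succ, iterCoact_succ, S.smpHom_comp_left, reassoc_of% B.coassoc,
    ← S.δ_natural, Category.assoc]

lemma iterCoact_comp_dS (i n : ℕ) (hi : i ≤ n) :
    iterCoact S B.coact (n+1) ≫ dS S n i B.X = iterCoact S B.coact (n+2) := by
  induction i generalizing n with
  | zero => rw [dS, iterCoact_add_two]
  | succ i ih =>
      obtain ⟨m, rfl⟩ : ∃ m, n = m + 1 := ⟨n - 1, by omega⟩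
      rw [dS, iterCoact_succ, Category.assoc, ← S.smpHom_comp_left, ih m (by omega),
        ← iterCoact_succ]

lemma iterCoact_comp_eS (i n : ℕ) (hi : i ≤ n) :
    iterCoact S B.coact (n+1) ≫ eS S n i B.X = iterCoact S B.coact n := by
  induction i generalizing n with
  | zero => rw [eS, iterCoact_succ, Category.assoc, S.ε_natural, reassoc_of% B.counit]
  | succ i ih =>
      obtain ⟨m, rfl⟩ : ∃ m, n = m + 1 := ⟨n - 1, by omega⟩
      rw [eS, iterCoact_succ, Category.assoc, ← S.smpHom_comp_left, ih m (by omega),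
        ← iterCoact_succ]

lemma act_comp_iterCoact (n : ℕ) (r : R ⟶ R) :
    B.act r ≫ iterCoact S B.coact n = iterCoact S B.coact n ≫ lamAt S n n B.toEObject_s10 r := by
  cases n with
  | zero => exact (Category.comp_id _).trans (Category.id_comp _).symm
  | succ n =>
      rw [lamAt, if_pos rfl, iterCoact_succ, reassoc_of% B.act_comp_coact,
        ← S.smpHom_exchange]
      exact (Category.assoc _ _ _).symm

lemma iterCoact_comp_lamAt_self (n : ℕ) (r : R ⟶ R) :
    iterCoact S B.coact (n+1) ≫ lamAt S (n+1) n B.toEObject_s10 r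
      = iterCoact S B.coact (n+1) ≫ rhoAtQ S n n B.X r := by
  cases n with
  | zero =>
      rw [lamAt, if_neg (by omega), iterCoact_one, rhoAtQ]
      exact B.coact_comp_smpHom_act r
  | succ m =>
      rw [lamAt, if_neg (by omega), lamAt, if_pos rfl, rhoAtQ, if_pos rfl,
        iterCoact_add_two, Category.assoc, Category.assoc, δ_comp_rhoAct]

lemma iterCoact_comp_lamAt (n j : ℕ) (r : R ⟶ R) (hj : j < n) :
    iterCoact S B.coact n ≫ lamAt S n j B.toEObject_s10 r
      = iterCoact S B.coact n ≫ rhoAt' S n j B.X r := by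
  induction n with
  | zero => omega
  | succ n ih =>
      rcases Nat.lt_succ_iff_lt_or_eq.mp hj with hlt | rfl
      · obtain ⟨m, rfl⟩ : ∃ m, n = m + 1 := ⟨n - 1, by omega⟩
        rw [lamAt, if_neg (by omega), rhoAt', rhoAtQ, if_neg (by omega), iterCoact_succ,
          Category.assoc, Category.assoc, ← S.smpHom_comp_left, ← S.smpHom_comp_left,
          ih hlt, rhoAt']
      · exact B.iterCoact_comp_lamAt_self j r

end QComod

/-- `ζ n M : 𝐐_n M → Q^n M` is the joint equalizer of the pairs `λ_j(r), ρ_j(r)`, and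
`⟨φ, ζ⟩` is a morphism of lax comonads `⟨𝓔, 𝐐⟩ → ⟨C, Q⟩`. -/
structure IsCanonicalLaxComonad (S : RightMonoidalStruct C R) {Qb : ℕ → EndoData (EObject S)}
    (ζ : ∀ (n : ℕ) (M : EObject S), ((Qb n).obj M).X ⟶ Qpow S n M.X)
    (Lc : LaxComonadStr Qb) : Prop where
  nat : ∀ (n : ℕ) {M N : EObject S} (f : M ⟶ N),
    ((Qb n).map f).1 ≫ ζ n N = ζ n M ≫ Qiter S n f.1
  equalizes : ∀ (n j : ℕ) (M : EObject S) (r : R ⟶ R), j < n →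
    ζ n M ≫ lamAt S n j M r = ζ n M ≫ rhoAt' S n j M.X r
  univ : ∀ (n : ℕ) (M : EObject S) {Y : C} (t : Y ⟶ Qpow S n M.X),
    (∀ (j : ℕ) (r : R ⟶ R), j < n → t ≫ lamAt S n j M r = t ≫ rhoAt' S n j M.X r) →
    ∃! u : Y ⟶ ((Qb n).obj M).X, u ≫ ζ n M = t
  act : ∀ (n : ℕ) (M : EObject S) (r : R ⟶ R),
    ((Qb n).obj M).act r ≫ ζ n M = ζ n M ≫ lamAt S n n M r
  d : ∀ (n i : ℕ) (M : EObject S), i ≤ n →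
    (Lc.d n i M).1 ≫ ζ (n+2) M = ζ (n+1) M ≫ dS S n i M.X
  e : ∀ (n i : ℕ) (M : EObject S), i ≤ n →
    (Lc.e n i M).1 ≫ ζ n M = ζ (n+1) M ≫ eS S n i M.X
  ν : ∀ (m n : ℕ) (M : EObject S),
    (Lc.ν m n M).1 ≫ ζ (m+n) M
      = ζ m ((Qb n).obj M) ≫ Qiter S m (ζ n M) ≫ eqToHom (Qpow_comp S m n M.X)
  ι : ∀ M : EObject S, (Lc.ι M).1 ≫ ζ 0 M = 𝟙 M.X

namespace IsCanonicalLaxComonad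

variable {S : RightMonoidalStruct C R} {Qb : ℕ → EndoData (EObject S)}
  {ζ : ∀ (n : ℕ) (M : EObject S), ((Qb n).obj M).X ⟶ Qpow S n M.X} {Lc : LaxComonadStr Qb}

lemma cancel_ζ (H : IsCanonicalLaxComonad S ζ Lc) {n : ℕ} {M : EObject S} {Y : C}
    {u v : Y ⟶ ((Qb n).obj M).X} (h : u ≫ ζ n M = v ≫ ζ n M) : u = v :=
  (H.univ n M (v ≫ ζ n M) fun j r hj => by
    rw [Category.assoc, Category.assoc, H.equalizes n j M r hj]).unique h rfl

noncomputable def lift (H : IsCanonicalLaxComonad S ζ Lc) (n : ℕ) (M : EObject S) {Y : C}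
    (t : Y ⟶ Qpow S n M.X)
    (ht : ∀ (j : ℕ) (r : R ⟶ R), j < n → t ≫ lamAt S n j M r = t ≫ rhoAt' S n j M.X r) :
    Y ⟶ ((Qb n).obj M).X :=
  (H.univ n M t ht).exists.choose

lemma lift_comp_ζ (H : IsCanonicalLaxComonad S ζ Lc) (n : ℕ) (M : EObject S) {Y : C}
    (t : Y ⟶ Qpow S n M.X)
    (ht : ∀ (j : ℕ) (r : R ⟶ R), j < n → t ≫ lamAt S n j M r = t ≫ rhoAt' S n j M.X r) :
    H.lift n M t ht ≫ ζ n M = t :=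
  (H.univ n M t ht).exists.choose_spec

lemma α_comp_ζ (H : IsCanonicalLaxComonad S ζ Lc) (A : LaxComod Lc) (n : ℕ) :
    (A.α n).1 ≫ ζ n A.pt = iterCoact S ((A.α 1).1 ≫ ζ 1 A.pt) n := by
  induction n with
  | zero => rw [A.compat_ι, H.ι, iterCoact_zero]
  | succ n ih =>
      have hα : (A.α (n+1)).1 = (A.α n).1 ≫ ((Qb n).map (A.α 1)).1 ≫ (Lc.ν n 1 A.pt).1 :=
        congrArg Subtype.val (A.compat_ν n 1).symm
      rw [hα, Category.assoc, Category.assoc, H.ν, reassoc_of% H.nat, reassoc_of% ih,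
        ← reassoc_of% Qiter_comp]
      exact iterCoact_comp_Qiter S _ n

lemma coact_counit (H : IsCanonicalLaxComonad S ζ Lc) (A : LaxComod Lc) :
    ((A.α 1).1 ≫ ζ 1 A.pt) ≫ S.ε A.pt.X = 𝟙 A.pt.X := by
  have hε : ζ 1 A.pt ≫ S.ε A.pt.X = (Lc.e 0 0 A.pt).1 ≫ ζ 0 A.pt := (H.e 0 0 A.pt le_rfl).symm
  have hα : (A.α 1).1 ≫ (Lc.e 0 0 A.pt).1 = (A.α 0).1 :=
    congrArg Subtype.val (A.compat_e 0 0 le_rfl)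
  rw [Category.assoc, hε, reassoc_of% hα, A.compat_ι, H.ι]

lemma coact_coassoc (H : IsCanonicalLaxComonad S ζ Lc) (A : LaxComod Lc) :
    ((A.α 1).1 ≫ ζ 1 A.pt) ≫ S.smpHom ((A.α 1).1 ≫ ζ 1 A.pt) (𝟙 R)
      = ((A.α 1).1 ≫ ζ 1 A.pt) ≫ S.δ A.pt.X := by
  have hδ : ζ 1 A.pt ≫ S.δ A.pt.X = (Lc.d 0 0 A.pt).1 ≫ ζ 2 A.pt := (H.d 0 0 A.pt le_rfl).symm
  have hα : (A.α 1).1 ≫ (Lc.d 0 0 A.pt).1 = (A.α 2).1 :=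
    congrArg Subtype.val (A.compat_d 0 0 le_rfl)
  rw [Category.assoc _ _ (S.δ _), hδ, reassoc_of% hα, H.α_comp_ζ A 2, iterCoact_succ,
    iterCoact_one]

abbrev toQComod (H : IsCanonicalLaxComonad S ζ Lc) (A : LaxComod Lc) : QComod S :=
  ⟨A.pt.X, (A.α 1).1 ≫ ζ 1 A.pt, H.coact_coassoc A, H.coact_counit A⟩

lemma act_eq_toQComod_act (H : IsCanonicalLaxComonad S ζ Lc) (A : LaxComod Lc) (r : R ⟶ R) :
    A.pt.act r = (H.toQComod A).act r := by
  have hα : A.pt.act r ≫ (A.α 1).1 = (A.α 1).1 ≫ ((Qb 1).obj A.pt).act r := (A.α 1).2 r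
  conv_lhs => rw [← Category.comp_id (A.pt.act r), ← H.coact_counit A]
  rw [Category.assoc (A.α 1).1, reassoc_of% hα, reassoc_of% H.act, lamAt, if_pos rfl]
  simp only [QComod.act, toQComod, Category.assoc]

lemma coact_comp_hom (H : IsCanonicalLaxComonad S ζ Lc) {A B : LaxComod Lc} (t : A ⟶ B) :
    (H.toQComod A).coact ≫ S.smpHom t.1.1 (𝟙 R) = t.1.1 ≫ (H.toQComod B).coact := by
  have ht : t.1.1 ≫ (B.α 1).1 = (A.α 1).1 ≫ ((Qb 1).map t.1).1 := congrArg Subtype.val (t.2 1)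
  simp only [toQComod]
  rw [Category.assoc, show S.smpHom t.1.1 (𝟙 R) = Qiter S 1 t.1.1 from rfl, ← H.nat,
    reassoc_of% ht]

def comparison (H : IsCanonicalLaxComonad S ζ Lc) : LaxComod Lc ⥤ QComod S where
  obj := H.toQComod
  map t := ⟨t.1.1, H.coact_comp_hom t⟩

lemma comparison_faithful (H : IsCanonicalLaxComonad S ζ Lc) : H.comparison.Faithful :=
  ⟨fun {A B} _ _ h => Subtype.ext (Subtype.ext
    (congrArg (fun s : H.toQComod A ⟶ H.toQComod B => s.1) h))⟩

def homOfQComodHom (H : IsCanonicalLaxComonad S ζ Lc) {A B : LaxComod Lc}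
    (s : H.toQComod A ⟶ H.toQComod B) : A ⟶ B :=
  let f : A.pt ⟶ B.pt := ⟨s.1, fun r => by
    rw [H.act_eq_toQComod_act A, H.act_eq_toQComod_act B]
    exact QComod.act_comp_hom _ s r⟩
  ⟨f, fun n => Subtype.ext <| H.cancel_ζ <| by
    change (s.1 ≫ (B.α n).1) ≫ ζ n B.pt = ((A.α n).1 ≫ ((Qb n).map f).1) ≫ ζ n B.pt
    rw [Category.assoc, H.α_comp_ζ, iterCoact_naturality S _ _ s.1 s.2, ← H.α_comp_ζ,
      Category.assoc, Category.assoc, H.nat]⟩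

lemma comparison_full (H : IsCanonicalLaxComonad S ζ Lc) : H.comparison.Full :=
  ⟨fun s => ⟨H.homOfQComodHom s, rfl⟩⟩

noncomputable def liftIterCoact (H : IsCanonicalLaxComonad S ζ Lc) (B : QComod S) (n : ℕ) :
    B.toEObject_s10 ⟶ (Qb n).obj B.toEObject_s10 :=
  ⟨H.lift n _ (iterCoact S B.coact n) (B.iterCoact_comp_lamAt n), fun r => H.cancel_ζ <| by
    rw [Category.assoc, Category.assoc, H.lift_comp_ζ, H.act, reassoc_of% H.lift_comp_ζ]
    exact B.act_comp_iterCoact n r⟩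

lemma liftIterCoact_comp_ζ (H : IsCanonicalLaxComonad S ζ Lc) (B : QComod S) (n : ℕ) :
    (H.liftIterCoact B n).1 ≫ ζ n B.toEObject_s10 = iterCoact S B.coact n :=
  H.lift_comp_ζ n _ _ (B.iterCoact_comp_lamAt n)

noncomputable def ofQComod (H : IsCanonicalLaxComonad S ζ Lc) (B : QComod S) : LaxComod Lc where
  pt := B.toEObject_s10
  α := H.liftIterCoact B
  compat_d n i hi := Subtype.ext <| H.cancel_ζ <| by
    change ((H.liftIterCoact B (n+1)).1 ≫ (Lc.d n i _).1) ≫ _ = _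
    rw [Category.assoc, H.d n i _ hi, reassoc_of% H.liftIterCoact_comp_ζ,
      B.iterCoact_comp_dS i n hi, H.liftIterCoact_comp_ζ]
  compat_e n i hi := Subtype.ext <| H.cancel_ζ <| by
    change ((H.liftIterCoact B (n+1)).1 ≫ (Lc.e n i _).1) ≫ _ = _
    rw [Category.assoc, H.e n i _ hi, reassoc_of% H.liftIterCoact_comp_ζ,
      B.iterCoact_comp_eS i n hi, H.liftIterCoact_comp_ζ]
  compat_ν m n := Subtype.ext <| H.cancel_ζ <| by
    change ((H.liftIterCoact B m).1 ≫ ((Qb m).map (H.liftIterCoact B n)).1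
      ≫ (Lc.ν m n _).1) ≫ _ = _
    rw [Category.assoc, Category.assoc, H.ν, reassoc_of% H.nat,
      reassoc_of% H.liftIterCoact_comp_ζ, ← reassoc_of% Qiter_comp, H.liftIterCoact_comp_ζ,
      iterCoact_comp_Qiter_iterCoact, H.liftIterCoact_comp_ζ]
  compat_ι := Subtype.ext <| H.cancel_ζ <| by
    rw [H.liftIterCoact_comp_ζ, H.ι]
    rfl

lemma coact_comparison_obj_ofQComod (H : IsCanonicalLaxComonad S ζ Lc) (B : QComod S) :
    (H.comparison.obj (H.ofQComod B)).coact = B.coact :=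
  (H.liftIterCoact_comp_ζ B 1).trans (iterCoact_one S B.coact)

noncomputable def comparisonObjOfQComodIso (H : IsCanonicalLaxComonad S ζ Lc) (B : QComod S) :
    H.comparison.obj (H.ofQComod B) ≅ B where
  hom := ⟨𝟙 B.X, by
    erw [S.smpHom_id, Category.comp_id, Category.id_comp, H.coact_comparison_obj_ofQComod]⟩
  inv := ⟨𝟙 B.X, by
    erw [S.smpHom_id, Category.comp_id, Category.id_comp, H.coact_comparison_obj_ofQComod]⟩
  hom_inv_id := Subtype.ext (Category.id_comp _)
  inv_hom_id := Subtype.ext (Category.id_comp _)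

lemma comparison_isEquivalence (H : IsCanonicalLaxComonad S ζ Lc) :
    H.comparison.IsEquivalence where
  faithful := H.comparison_faithful
  full := H.comparison_full
  essSurj := ⟨fun B => ⟨H.ofQComod B, ⟨H.comparisonObjOfQComodIso B⟩⟩⟩

end IsCanonicalLaxComonad

theorem lax_comodules_equivalence_general (S : RightMonoidalStruct C R)
    (Qb : ℕ → EndoData (EObject S))
    (ζ : ∀ (n : ℕ) (M : EObject S), ((Qb n).obj M).X ⟶ Qpow S n M.X)
    (hζ_nat : ∀ (n : ℕ) {M N : EObject S} (f : M ⟶ N),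
        ((Qb n).map f).1 ≫ ζ n N = ζ n M ≫ Qiter S n f.1)
    (hζ_eq : ∀ (n j : ℕ) (M : EObject S) (r : R ⟶ R), j < n →
        ζ n M ≫ lamAt S n j M r = ζ n M ≫ rhoAt' S n j M.X r)
    (hζ_univ : ∀ (n : ℕ) (M : EObject S) {Y : C} (t : Y ⟶ Qpow S n M.X),
        (∀ (j : ℕ) (r : R ⟶ R), j < n →
          t ≫ lamAt S n j M r = t ≫ rhoAt' S n j M.X r) →
        ∃! u : Y ⟶ ((Qb n).obj M).X, u ≫ ζ n M = t)
    (hζ_act : ∀ (n : ℕ) (M : EObject S) (r : R ⟶ R),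
        ((Qb n).obj M).act r ≫ ζ n M = ζ n M ≫ lamAt S n n M r)
    (Lc : LaxComonadStr Qb)
    (hd : ∀ (n i : ℕ) (M : EObject S), i ≤ n →
        (Lc.d n i M).1 ≫ ζ (n+2) M = ζ (n+1) M ≫ dS S n i M.X)
    (he : ∀ (n i : ℕ) (M : EObject S), i ≤ n →
        (Lc.e n i M).1 ≫ ζ n M = ζ (n+1) M ≫ eS S n i M.X)
    (hν : ∀ (m n : ℕ) (M : EObject S),
        (Lc.ν m n M).1 ≫ ζ (m+n) M
          = ζ m ((Qb n).obj M) ≫ Qiter S m (ζ n M) ≫ eqToHom (Qpow_comp S m n M.X))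
    (hι : ∀ M : EObject S, (Lc.ι M).1 ≫ ζ 0 M = 𝟙 M.X) :
    ∃ Phat : LaxComod Lc ⥤ QComod S,
      (∃ hobj : ∀ A : LaxComod Lc, (Phat.obj A).X = A.pt.X,
        (∀ A : LaxComod Lc,
            (Phat.obj A).coact
              = eqToHom (hobj A) ≫ (A.α 1).1 ≫ ζ 1 A.pt
                  ≫ S.smpHom (eqToHom (hobj A).symm) (𝟙 R)) ∧
        (∀ {A B : LaxComod Lc} (t : A ⟶ B),
            (Phat.map t).1 = eqToHom (hobj A) ≫ t.1.1 ≫ eqToHom (hobj B).symm)) ∧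
      Phat.IsEquivalence := by
  have H : IsCanonicalLaxComonad S ζ Lc := ⟨hζ_nat, hζ_eq, hζ_univ, hζ_act, hd, he, hν, hι⟩
  refine ⟨H.comparison, ⟨fun _ => rfl, fun _ => ?_, fun _ => ?_⟩, H.comparison_isEquivalence⟩
  · erw [eqToHom_refl, S.smpHom_id, Category.id_comp, Category.comp_id]
    rfl
  · erw [eqToHom_refl, Category.id_comp, Category.comp_id]
    rfl

/-- Theorem 6.3 of Szlachányi.  For a right-monoidal
category with complete underlying category, the functor `φ̂ : 𝓔^𝐐 → M^Q`
induced by the morphism of lax comonads `⟨φ, ζ⟩` — sending a `𝐐`-comodule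
`⟨M, α⟩` to the `Q`-comodule with underlying object `φM` and coaction
`ζ^1_M ∘ φα_1` — is an equivalence of categories. -/
theorem lax_comodules_equivalence (S : RightMonoidalStruct C R)
    [Limits.HasLimits C]
    (Qb : ℕ → EndoData (EObject S))
    (ζ : ∀ (n : ℕ) (M : EObject S), ((Qb n).obj M).X ⟶ Qpow S n M.X)
    (hζ_nat : ∀ (n : ℕ) {M N : EObject S} (f : M ⟶ N),
        ((Qb n).map f).1 ≫ ζ n N = ζ n M ≫ Qiter S n f.1)
    (hζ_eq : ∀ (n j : ℕ) (M : EObject S) (r : R ⟶ R), j < n →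
        ζ n M ≫ lamAt S n j M r = ζ n M ≫ rhoAt' S n j M.X r)
    (hζ_univ : ∀ (n : ℕ) (M : EObject S) {Y : C} (t : Y ⟶ Qpow S n M.X),
        (∀ (j : ℕ) (r : R ⟶ R), j < n →
          t ≫ lamAt S n j M r = t ≫ rhoAt' S n j M.X r) →
        ∃! u : Y ⟶ ((Qb n).obj M).X, u ≫ ζ n M = t)
    (hζ_act : ∀ (n : ℕ) (M : EObject S) (r : R ⟶ R),
        ((Qb n).obj M).act r ≫ ζ n M = ζ n M ≫ lamAt S n n M r)
    (Lc : LaxComonadStr Qb)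
    (hd : ∀ (n i : ℕ) (M : EObject S), i ≤ n →
        (Lc.d n i M).1 ≫ ζ (n+2) M = ζ (n+1) M ≫ dS S n i M.X)
    (he : ∀ (n i : ℕ) (M : EObject S), i ≤ n →
        (Lc.e n i M).1 ≫ ζ n M = ζ (n+1) M ≫ eS S n i M.X)
    (hν : ∀ (m n : ℕ) (M : EObject S),
        (Lc.ν m n M).1 ≫ ζ (m+n) M
          = ζ m ((Qb n).obj M) ≫ Qiter S m (ζ n M) ≫ eqToHom (Qpow_comp S m n M.X))
    (hι : ∀ M : EObject S, (Lc.ι M).1 ≫ ζ 0 M = 𝟙 M.X) :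
    ∃ Phat : LaxComod Lc ⥤ QComod S,
      (∃ hobj : ∀ A : LaxComod Lc, (Phat.obj A).X = A.pt.X,
        (∀ A : LaxComod Lc,
            (Phat.obj A).coact
              = eqToHom (hobj A) ≫ (A.α 1).1 ≫ ζ 1 A.pt
                  ≫ S.smpHom (eqToHom (hobj A).symm) (𝟙 R)) ∧
        (∀ {A B : LaxComod Lc} (t : A ⟶ B),
            (Phat.map t).1 = eqToHom (hobj A) ≫ t.1.1 ≫ eqToHom (hobj B).symm)) ∧
      Phat.IsEquivalence :=
  lax_comodules_equivalence_general S Qb ζ hζ_nat hζ_eq hζ_univ hζ_act Lc hd he hν hι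
end
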